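/- Let λ₁, ..., λ_m : ℝ → ℝ be differentiable at x and suppose Λ(x) = max_i λ_i(x) is not differentiable at x. Then there exist indices i ≠ j, both attaining the maximum at x, such that max(λ_i, λ_j) is not differentiable at x. -/

import Mathlib

/-!
Only the indices attaining the maximum at `x` matter: by continuity, near `x` the maximum `Λ`
is the maximum over those active indices. If every pair of active indices had a differentiable
maximum, all active `λ_i` would share one derivative `c` at `x`, because a differentiable function
touching a differentiable `λ_i` from above at `x` has the same derivative there. A finite maximum
of functions with a common value and a common derivative `c` at `x` has derivative `c`, so `Λ`
would be differentiable at `x`.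
-/

open Filter Topology

section Touching

variable {f g : ℝ → ℝ} {f' g' x : ℝ}

theorem HasDerivAt.eq_of_eventuallyLE_of_eq (hf : HasDerivAt f f' x) (hg : HasDerivAt g g' x)
    (hle : f ≤ᶠ[𝓝 x] g) (heq : f x = g x) : f' = g' := by
  have hmin : IsLocalMin (fun y => g y - f y) x :=
    hle.mono fun y hy => by simpa [heq] using hy
  linarith [hmin.hasDerivAt_eq_zero (hg.sub hf)]

theorem HasDerivAt.eq_of_differentiableAt_max (hf : HasDerivAt f f' x) (hg : HasDerivAt g g' x)
    (heq : f x = g x) (hmax : DifferentiableAt ℝ (fun y => max (f y) (g y)) x) : f' = g' := by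
  have hf_max := hf.eq_of_eventuallyLE_of_eq hmax.hasDerivAt
    (.of_forall fun _ => le_max_left _ _) (by simp [heq])
  have hg_max := hg.eq_of_eventuallyLE_of_eq hmax.hasDerivAt
    (.of_forall fun _ => le_max_right _ _) (by simp [heq])
  rw [hf_max, hg_max]

theorem HasDerivAt.abs_of_eq_zero {h : ℝ → ℝ} (hh : HasDerivAt h 0 x) (h0 : h x = 0) :
    HasDerivAt (fun y => |h y|) 0 x := by
  rw [hasDerivAt_iff_isLittleO] at hh ⊢
  simpa [h0] using hh.norm_left

theorem HasDerivAt.max_of_eq (hf : HasDerivAt f f' x) (hg : HasDerivAt g f' x) (heq : f x = g x) :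
    HasDerivAt (fun y => max (f y) (g y)) f' x := by
  have habs : HasDerivAt (fun y => |g y - f y|) 0 x :=
    HasDerivAt.abs_of_eq_zero (by simpa using hg.fun_sub hf) (by simp [heq])
  have hmid := (((hf.fun_add hg).fun_add habs).const_mul (2⁻¹ : ℝ))
  rw [show 2⁻¹ * (f' + f' + 0) = f' by ring] at hmid
  refine hmid.congr_of_eventuallyEq (Eventually.of_forall fun y => ?_)
  exact sup_eq_half_smul_add_add_abs_sub' ℝ (f y) (g y)

end Touching

theorem HasDerivAt.finset_sup'_of_eq {ι : Type*} {s : Finset ι} (hs : s.Nonempty) {f : ι → ℝ → ℝ}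
    {c x a : ℝ} (hf : ∀ i ∈ s, HasDerivAt (f i) c x) (hfx : ∀ i ∈ s, f i x = a) :
    HasDerivAt (fun y => s.sup' hs fun i => f i y) c x := by
  have key : HasDerivAt (s.sup' hs f) c x ∧ s.sup' hs f x = a := by
    refine Finset.sup'_induction hs f (p := fun g => HasDerivAt g c x ∧ g x = a) ?_
      fun i hi => ⟨hf i hi, hfx i hi⟩
    rintro g₁ ⟨hg₁, hg₁x⟩ g₂ ⟨hg₂, hg₂x⟩
    exact ⟨hg₁.max_of_eq hg₂ (hg₁x.trans hg₂x.symm), by simp [hg₁x, hg₂x]⟩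
  convert key.1 using 1
  ext y
  rw [Finset.sup'_apply]

section ActiveIndices

variable {ι : Type*} [Fintype ι] (lam : ι → ℝ → ℝ) (x : ℝ)

noncomputable def activeIndices : Finset ι :=
  Finset.univ.filter fun i => lam i x = ⨆ k, lam k x

variable {lam x}

theorem mem_activeIndices {i : ι} : i ∈ activeIndices lam x ↔ lam i x = ⨆ k, lam k x := by
  simp [activeIndices]

theorem activeIndices_nonempty [Nonempty ι] : (activeIndices lam x).Nonempty :=
  let ⟨i, hi⟩ := exists_eq_ciSup_of_finite (f := fun k => lam k x)
  ⟨i, mem_activeIndices.2 hi⟩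

theorem iSup_eventuallyEq_sup'_activeIndices [Nonempty ι] (hcont : ∀ i, ContinuousAt (lam i) x) :
    (fun y => ⨆ i, lam i y) =ᶠ[𝓝 x]
      fun y => (activeIndices lam x).sup' activeIndices_nonempty fun i => lam i y := by
  obtain ⟨i₀, hi₀⟩ : (activeIndices lam x).Nonempty := activeIndices_nonempty
  have hinactive : ∀ᶠ y in 𝓝 x, ∀ i ∉ activeIndices lam x, lam i y < lam i₀ y := by
    refine eventually_all.2 fun i => ?_
    by_cases hi : i ∈ activeIndices lam x
    · exact Eventually.of_forall fun _ h => absurd hi h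
    · have hlt : lam i x < lam i₀ x := by
        rw [mem_activeIndices.1 hi₀]
        exact (le_ciSup (Finite.bddAbove_range fun k => lam k x) i).lt_of_ne
          (mt mem_activeIndices.2 hi)
      filter_upwards [(hcont i).eventually_lt (hcont i₀) hlt] with y hy _ using hy
  filter_upwards [hinactive] with y hy
  refine le_antisymm (ciSup_le fun i => ?_) (Finset.sup'_le _ _ fun i _ => ?_)
  · by_cases hi : i ∈ activeIndices lam x
    · exact Finset.le_sup' (fun i => lam i y) hi
    · exact (hy i hi).le.trans (Finset.le_sup' (fun i => lam i y) hi₀)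
  · exact le_ciSup (Finite.bddAbove_range fun k => lam k y) i

end ActiveIndices

/-- If each `λ_i` is differentiable at `x` but the pointwise maximum
`Λ = max_i λ_i` is not, then there are two distinct indices `i ≠ j`, both
attaining the maximum at `x`, such that `max(λ_i, λ_j)` is not
differentiable at `x`. -/
theorem stmt3 (m : ℕ) (lam : Fin (m + 1) → ℝ → ℝ) (x : ℝ)
    (hdiff : ∀ i, DifferentiableAt ℝ (lam i) x)
    (hΛ : ¬ DifferentiableAt ℝ (fun y => ⨆ i, lam i y) x) :
    ∃ i j : Fin (m + 1), i ≠ j ∧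
      lam i x = ⨆ k, lam k x ∧ lam j x = ⨆ k, lam k x ∧
      ¬ DifferentiableAt ℝ (fun y => max (lam i y) (lam j y)) x := by
  by_contra! hpairs
  obtain ⟨i₀, hi₀⟩ : (activeIndices lam x).Nonempty := activeIndices_nonempty
  have hcommon : ∀ i ∈ activeIndices lam x, HasDerivAt (lam i) (deriv (lam i₀) x) x := by
    intro i hi
    rcases eq_or_ne i i₀ with rfl | hne
    · exact (hdiff i).hasDerivAt
    · have hi' := mem_activeIndices.1 hi
      have hi₀' := mem_activeIndices.1 hi₀
      rw [(hdiff i₀).hasDerivAt.eq_of_differentiableAt_max (hdiff i).hasDerivAt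
        (hi₀'.trans hi'.symm) (hpairs i₀ i hne.symm hi₀' hi')]
      exact (hdiff i).hasDerivAt
  have hsup := HasDerivAt.finset_sup'_of_eq activeIndices_nonempty hcommon
    fun i hi => mem_activeIndices.1 hi
  exact hΛ (hsup.congr_of_eventuallyEq
    (iSup_eventuallyEq_sup'_activeIndices fun i => (hdiff i).continuousAt)).differentiableAt
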